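/- Let Γ be the simple graph on vertices {1,...,7} where {1,2,3} and {4,5,6,7} induce complete subgraphs, vertex 3 is additionally adjacent to vertex 4 only, and there are no other edges. Then the complement of Γ contains no odd cycle, yet Γ has diameter three with the distance from vertex 1 to vertex 7 equal to 3. -/

import Mathlib

/-!
The complement of `graphC1` only joins `{0,1,2}` to `{3,4,5,6}`, so it is bipartite and has no
odd closed walk. In `graphC1` itself the adjacent vertices `2` and `3` dominate every vertex,
so any two vertices are joined through them by a walk of length at most `3`; and `0`, `6` are
distinct, non-adjacent and have no common neighbour, so their distance is exactly `3`.
-/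

/-- The graph `C₁`: vertices `0,...,6` (standing for `1,...,7`), with `{0,1,2}` and
`{3,4,5,6}` inducing complete subgraphs, and the additional edge between `2` and `3`. -/
def graphC1 : SimpleGraph (Fin 7) :=
  SimpleGraph.fromRel (fun v w =>
    (v.val < 3 ∧ w.val < 3) ∨ (3 ≤ v.val ∧ 3 ≤ w.val) ∨ (v.val = 2 ∧ w.val = 3))

instance : DecidableRel graphC1.Adj := fun a b =>
  decidable_of_iff' _ (SimpleGraph.fromRel_adj _ a b)

namespace SimpleGraph

variable {V : Type*} {G : SimpleGraph V}

theorem edist_le_three_of_isClique_of_dominating {S : Set V} (hS : G.IsClique S)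
    (hdom : ∀ v, ∃ s ∈ S, G.Adj v s ∨ v = s) (u v : V) : G.edist u v ≤ 3 := by
  obtain ⟨s, hs, hus⟩ := hdom u
  obtain ⟨t, ht, hvt⟩ := hdom v
  have hst : G.edist s t ≤ 1 := by
    rw [edist_le_one_iff_adj_or_eq]
    by_cases h : s = t
    · exact .inr h
    · exact .inl (hS hs ht h)
  calc G.edist u v ≤ G.edist u s + G.edist s t + G.edist t v :=
        (G.edist_triangle (v := t)).trans (add_le_add_left G.edist_triangle _)
    _ ≤ 1 + 1 + 1 := by
        gcongr
        · exact edist_le_one_iff_adj_or_eq.mpr hus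
        · rw [edist_comm]; exact edist_le_one_iff_adj_or_eq.mpr hvt
    _ = 3 := by norm_num

theorem dist_le_of_edist_le {u v : V} {n : ℕ} (h : G.edist u v ≤ n) : G.dist u v ≤ n := by
  simpa [dist] using ENat.toNat_le_toNat h (ENat.natCast_ne_top n)

end SimpleGraph

open SimpleGraph

theorem graphC1_compl_colorable_two : graphC1ᶜ.Colorable 2 :=
  ⟨Coloring.mk (fun v => if v.val < 3 then 0 else 1) (by decide)⟩

theorem graphC1_edist_le_three (u v : Fin 7) : graphC1.edist u v ≤ 3 := by
  refine edist_le_three_of_isClique_of_dominating (S := {2, 3})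
    (isClique_pair.mpr fun _ => by decide) (fun w => ?_) u v
  simp only [Set.mem_insert_iff, Set.mem_singleton_iff, exists_eq_or_imp, exists_eq_left]
  revert w
  decide

theorem graphC1_two_lt_edist_zero_six : 2 < graphC1.edist 0 6 := by
  refine two_lt_edist_iff.mpr ⟨by decide, by decide, ?_⟩
  ext w
  simp only [mem_commonNeighbors, Set.mem_empty_iff_false, iff_false]
  revert w
  decide

theorem graphC1_no_odd_cycle_but_diameter_three :
    (¬ ∃ (v : Fin 7) (c : graphC1ᶜ.Walk v v), c.IsCycle ∧ Odd c.length) ∧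
    (∀ u v : Fin 7, graphC1.dist u v ≤ 3) ∧
    graphC1.dist 0 6 = 3 := by
  refine ⟨?_, fun u v => dist_le_of_edist_le (graphC1_edist_le_three u v), ?_⟩
  · rintro ⟨v, c, -, hodd⟩
    exact Nat.not_odd_iff_even.mpr (two_colorable_iff_forall_loop_even.mp
      graphC1_compl_colorable_two v c) hodd
  · have h : graphC1.edist 0 6 = 3 :=
      le_antisymm (graphC1_edist_le_three 0 6)
        (Order.add_one_le_of_lt graphC1_two_lt_edist_zero_six)
    simp [SimpleGraph.dist, h]
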